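/- Fix ζ > 0 and μ ≥ 0, let Σ be a positive semidefinite matrix with Tr(Σ) < ∞, and consider the fixed point equation μ⋆ = μ + n/(1 + Tr(Σ(ζI + μ⋆Σ)⁻¹)) for μ⋆ > μ. This equation has a unique solution μ⋆(ζ, μ) on (μ, ∞). -/

import Mathlib

/-!
Diagonalising `Σ` turns the trace into `g t = ∑ λᵢ / (ζ + t λᵢ)`, and the fixed point equation
into `φ t = n` with `φ t = (t - μ) (1 + g t)`. Each summand `(t - μ) λᵢ / (ζ + t λᵢ)` is
nondecreasing on `[μ, ∞)`, so `φ` is strictly increasing there; since `φ μ = 0 < n ≤ φ (μ + n)`,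
the intermediate value theorem gives exactly one root.
-/

open Matrix Set

section FixedPoint

variable {g : ℝ → ℝ} {μ c : ℝ}

lemma nonneg_of_monotoneOn_sub_mul (hmono : MonotoneOn (fun t => (t - μ) * g t) (Ici μ))
    {t : ℝ} (ht : μ < t) : 0 ≤ g t := by
  have := hmono self_mem_Ici ht.le ht.le
  simp only [sub_self, zero_mul] at this
  exact nonneg_of_mul_nonneg_right this (sub_pos.mpr ht)

lemma strictMonoOn_sub_mul_one_add (hmono : MonotoneOn (fun t => (t - μ) * g t) (Ici μ)) :
    StrictMonoOn (fun t => (t - μ) * (1 + g t)) (Ici μ) := by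
  intro s hs t ht hst
  have := hmono hs ht hst.le
  simp only [mul_one_add] at this ⊢
  linarith

lemma eq_add_div_one_add_iff (hmono : MonotoneOn (fun t => (t - μ) * g t) (Ici μ))
    {t : ℝ} (ht : μ < t) : t = μ + c / (1 + g t) ↔ (t - μ) * (1 + g t) = c := by
  have hpos : 0 < 1 + g t := by linarith [nonneg_of_monotoneOn_sub_mul hmono ht]
  rw [← sub_eq_iff_eq_add', eq_div_iff hpos.ne']

theorem existsUnique_eq_add_div_one_add (hc : 0 < c) (hcont : ContinuousOn g (Ici μ))
    (hmono : MonotoneOn (fun t => (t - μ) * g t) (Ici μ)) :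
    ∃! t, μ < t ∧ t = μ + c / (1 + g t) := by
  set φ := fun t => (t - μ) * (1 + g t)
  have hφ : ContinuousOn φ (Icc μ (μ + c)) :=
    ((continuousOn_id.sub continuousOn_const).mul (continuousOn_const.add hcont)).mono
      Icc_subset_Ici_self
  have hφ_end : c ≤ φ (μ + c) := by
    have := nonneg_of_monotoneOn_sub_mul hmono (lt_add_of_pos_right μ hc)
    simp only [φ, add_sub_cancel_left]
    nlinarith
  obtain ⟨t, ⟨hμt, -⟩, hφt⟩ : c ∈ φ '' Icc μ (μ + c) :=
    intermediate_value_Icc (by linarith) hφ ⟨by simp [φ, hc.le], hφ_end⟩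
  have ht : μ < t := hμt.lt_of_ne (by rintro rfl; simp [φ, hc.ne] at hφt)
  refine ⟨t, ⟨ht, (eq_add_div_one_add_iff hmono ht).mpr hφt⟩, ?_⟩
  rintro s ⟨hs, hs_eq⟩
  exact (strictMonoOn_sub_mul_one_add hmono).injOn hs.le ht.le
    (((eq_add_div_one_add_iff hmono hs).mp hs_eq).trans hφt.symm)

end FixedPoint

lemma monotoneOn_sub_mul_div_add_mul {a ζ μ : ℝ} (ha : 0 ≤ a) (hζ : 0 < ζ + μ * a) :
    MonotoneOn (fun t => (t - μ) * (a / (ζ + t * a))) (Ici μ) := by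
  intro s (hs : μ ≤ s) t (ht : μ ≤ t) hst
  have hs' : 0 < ζ + s * a := by nlinarith
  have ht' : 0 < ζ + t * a := by nlinarith
  simp only [mul_div_assoc']
  rw [div_le_div_iff₀ hs' ht', ← sub_nonneg]
  have key : (t - μ) * a * (ζ + s * a) - (s - μ) * a * (ζ + t * a) = a * (t - s) * (ζ + μ * a) := by
    ring
  rw [key]
  exact mul_nonneg (mul_nonneg ha (sub_nonneg.mpr hst)) hζ.le

namespace Matrix

open scoped ComplexOrder

variable {ι 𝕜 : Type*} [Fintype ι] [DecidableEq ι] [RCLike 𝕜] {A : Matrix ι ι 𝕜}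

lemma IsHermitian.trace_cfc (hA : A.IsHermitian) (f : ℝ → ℝ) :
    (cfc f A).trace = ∑ i, (f (hA.eigenvalues i) : 𝕜) := by
  rw [hA.cfc_eq, IsHermitian.cfc, Unitary.conjStarAlgAut_apply, trace_mul_cycle,
    Unitary.coe_star_mul_self, one_mul, trace_diagonal]
  rfl

lemma IsHermitian.mul_inv_smul_one_add_smul (hA : A.IsHermitian) {ζ t : ℝ}
    (h : ∀ x ∈ spectrum ℝ A, ζ + t * x ≠ 0) :
    A * (ζ • 1 + t • A)⁻¹ = cfc (fun x => x / (ζ + t * x)) A := by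
  have hcont : ContinuousOn (fun x : ℝ => (ζ + t * x)⁻¹) (spectrum ℝ A) :=
    (continuous_const.add (continuous_const.mul continuous_id)).continuousOn.inv₀ h
  simp_rw [div_eq_mul_inv]
  rw [cfc_mul (fun x => x) (fun x => (ζ + t * x)⁻¹) A (hg := hcont), cfc_id' ℝ A, cfc_inv _ A h,
    cfc_const_add ζ _ A, cfc_const_mul t (fun x => x) A, cfc_id' ℝ A,
    nonsing_inv_eq_ringInverse, Algebra.algebraMap_eq_smul_one]

lemma PosSemidef.trace_mul_inv_smul_one_add_smul (hA : A.PosSemidef) {ζ t : ℝ} (hζ : 0 < ζ)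
    (ht : 0 ≤ t) :
    (A * (ζ • 1 + t • A)⁻¹).trace =
      ∑ i, ((hA.1.eigenvalues i / (ζ + t * hA.1.eigenvalues i) : ℝ) : 𝕜) := by
  rw [hA.1.mul_inv_smul_one_add_smul, hA.1.trace_cfc]
  rintro x hx
  obtain ⟨i, rfl⟩ := hA.1.spectrum_real_eq_range_eigenvalues ▸ hx
  exact (add_pos_of_pos_of_nonneg hζ (mul_nonneg ht (hA.eigenvalues_nonneg i))).ne'

end Matrix

theorem stmt6 {d : ℕ} (Sig : Matrix (Fin d) (Fin d) ℝ) (hSig : Sig.PosSemidef)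
    (n : ℕ) (hn : 0 < n) (ζ μ : ℝ) (hζ : 0 < ζ) (hμ : 0 ≤ μ) :
    ∃! t : ℝ, μ < t ∧
      t = μ + (n : ℝ) /
        (1 + (Sig * (ζ • (1 : Matrix (Fin d) (Fin d) ℝ) + t • Sig)⁻¹).trace) := by
  set ev := hSig.1.eigenvalues
  have hpos : ∀ t ∈ Ici μ, ∀ i, 0 < ζ + t * ev i := fun t ht i =>
    add_pos_of_pos_of_nonneg hζ (mul_nonneg (hμ.trans ht) (hSig.eigenvalues_nonneg i))
  have hcont : ContinuousOn (fun t => ∑ i, ev i / (ζ + t * ev i)) (Ici μ) :=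
    continuousOn_finsetSum _ fun i _ =>
      continuousOn_const.div (by fun_prop) fun t ht => (hpos t ht i).ne'
  have hmono : MonotoneOn (fun t => (t - μ) * ∑ i, ev i / (ζ + t * ev i)) (Ici μ) := by
    intro s hs t ht hst
    simp only [Finset.mul_sum]
    exact Finset.sum_le_sum fun i _ => monotoneOn_sub_mul_div_add_mul
      (hSig.eigenvalues_nonneg i) (hpos μ self_mem_Ici i) hs ht hst
  refine (existsUnique_congr fun t => and_congr_right fun ht => ?_).mp
    (existsUnique_eq_add_div_one_add (Nat.cast_pos.mpr hn) hcont hmono)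
  rw [hSig.trace_mul_inv_smul_one_add_smul hζ (hμ.trans ht.le)]
  rfl
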